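/- arXiv:1502.07131 — 4 statements merged into one kernel-verified Lean document; each statement's English description precedes it below -/
import Mathlib

section
/- For a symmetric positive definite q×q matrix variable Σ, the function Σ ↦ trace(A Σ^{-1/2}) + trace(Σ^{1/2}), where A is a fixed symmetric positive definite q×q matrix, is minimized at Σ = A, and the minimum value equals 2·trace(A^{1/2}). -/
open Matrix

/-- The positive semidefinite square root of a positive semidefinite matrix
(the definition `Matrix.PosSemidef.sqrt` of the older Mathlib, since removed). -/
noncomputable def Matrix.PosSemidef.sqrt {n 𝕜 : Type*} [Fintype n] [RCLike 𝕜] [PartialOrder 𝕜]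
    [DecidableEq n]     {A : Matrix n n 𝕜} (hA : A.PosSemidef) : Matrix n n 𝕜 :=
  hA.1.eigenvectorUnitary.1 * diagonal ((↑) ∘ (√·) ∘ hA.1.eigenvalues) *
  (star hA.1.eigenvectorUnitary : Matrix n n 𝕜)

/-!
With `T = A^{1/2}` and `R = Σ^{1/4}`, the excess
`trace(A Σ^{-1/2}) + trace(Σ^{1/2}) - 2 trace(A^{1/2})` equals `trace(M Mᵀ) ≥ 0`
for `M = R⁻¹ T - R`, by cyclicity of the trace; at `Σ = A` it vanishes since `A A^{-1/2} = A^{1/2}`.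
-/

namespace Matrix

variable {n : Type*} [Fintype n] [DecidableEq n]

lemma PosSemidef.posSemidef_sqrt {S : Matrix n n ℝ} (hS : S.PosSemidef) : hS.sqrt.PosSemidef :=
  (PosSemidef.diagonal fun _ => Real.sqrt_nonneg _).mul_mul_conjTranspose_same _

lemma PosSemidef.sqrt_mul_self {S : Matrix n n ℝ} (hS : S.PosSemidef) :
    hS.sqrt * hS.sqrt = S := by
  set U : Matrix n n ℝ := hS.1.eigenvectorUnitary.1
  have hU : star U * U = 1 := Unitary.star_mul_self_of_mem hS.1.eigenvectorUnitary.2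
  have hspec := hS.1.spectral_theorem
  rw [Unitary.conjStarAlgAut_apply] at hspec
  conv_rhs => rw [hspec]
  calc hS.sqrt * hS.sqrt
      = U * (diagonal (RCLike.ofReal ∘ (√·) ∘ hS.1.eigenvalues) * (star U * U) *
          diagonal (RCLike.ofReal ∘ (√·) ∘ hS.1.eigenvalues)) * star U := by
        simp only [PosSemidef.sqrt, U, Matrix.mul_assoc]
    _ = _ := by
        rw [hU, Matrix.mul_one, diagonal_mul_diagonal]
        congr 3
        funext i
        simp [Real.mul_self_sqrt (hS.eigenvalues_nonneg i)]

lemma PosDef.posDef_sqrt {S : Matrix n n ℝ} (hS : S.PosDef) : hS.posSemidef.sqrt.PosDef :=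
  hS.posSemidef.posSemidef_sqrt.posDef_iff_isUnit.mpr <| isUnit_of_mul_isUnit_left (hS.posSemidef.sqrt_mul_self.symm ▸ hS.isUnit)

lemma trace_le_trace_mul_inv_add {T R : Matrix n n ℝ} (hT : T.IsHermitian) (hR : R.IsHermitian)
    (hRu : IsUnit R) : 2 * T.trace ≤ (T * T * (R * R)⁻¹).trace + (R * R).trace := by
  have hRdet : IsUnit R.det := (isUnit_iff_isUnit_det R).mp hRu
  have hRinv : (R⁻¹)ᴴ = R⁻¹ := by rw [conjTranspose_nonsing_inv, hR.eq]
  have hsq := (posSemidef_self_mul_conjTranspose (R⁻¹ * T - R)).trace_nonneg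
  have hexp : (R⁻¹ * T - R) * (R⁻¹ * T - R)ᴴ
      = R⁻¹ * (T * T * R⁻¹) - R⁻¹ * (T * R) - R * (T * R⁻¹) + R * R := by
    rw [conjTranspose_sub, conjTranspose_mul, hT.eq, hRinv, hR.eq]
    noncomm_ring
  have hcross₁ : (R⁻¹ * (T * R)).trace = T.trace := by
    rw [trace_mul_comm, Matrix.mul_assoc, mul_nonsing_inv _ hRdet, Matrix.mul_one]
  have hcross₂ : (R * (T * R⁻¹)).trace = T.trace := by
    rw [trace_mul_comm, Matrix.mul_assoc, nonsing_inv_mul _ hRdet, Matrix.mul_one]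
  have hmain : (R⁻¹ * (T * T * R⁻¹)).trace = (T * T * (R * R)⁻¹).trace := by
    rw [trace_mul_comm, Matrix.mul_assoc, mul_inv_rev]
  rw [hexp, trace_add, trace_sub, trace_sub, hcross₁, hcross₂, hmain] at hsq
  linarith

lemma PosDef.mul_inv_sqrt {A : Matrix n n ℝ} (hA : A.PosDef) :
    A * hA.posSemidef.sqrt⁻¹ = hA.posSemidef.sqrt := by
  have hdet : IsUnit hA.posSemidef.sqrt.det :=
    (isUnit_iff_isUnit_det _).mp hA.posDef_sqrt.isUnit
  have hsq := hA.posSemidef.sqrt_mul_self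
  set s := hA.posSemidef.sqrt
  rw [← hsq, Matrix.mul_assoc, mul_nonsing_inv _ hdet, Matrix.mul_one]

end Matrix

/-- For a fixed symmetric positive definite `q×q` matrix `A`, the function
`Σ ↦ trace(A Σ^{-1/2}) + trace(Σ^{1/2})` over symmetric positive definite `Σ` is
minimized at `Σ = A`, with minimum value `2 trace(A^{1/2})`. -/
theorem stmt_0 {q : ℕ} (A : Matrix (Fin q) (Fin q) ℝ) (hA : A.PosDef) :
    (∀ (S : Matrix (Fin q) (Fin q) ℝ) (hS : S.PosDef),
      (A * (hA.posSemidef.sqrt)⁻¹).trace + (hA.posSemidef.sqrt).trace ≤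
        (A * (hS.posSemidef.sqrt)⁻¹).trace + (hS.posSemidef.sqrt).trace) ∧
    (A * (hA.posSemidef.sqrt)⁻¹).trace + (hA.posSemidef.sqrt).trace =
      2 * (hA.posSemidef.sqrt).trace := by
  have hmin : (A * hA.posSemidef.sqrt⁻¹).trace + hA.posSemidef.sqrt.trace =
      2 * hA.posSemidef.sqrt.trace := by
    rw [hA.mul_inv_sqrt]; ring
  refine ⟨fun S hS => ?_, hmin⟩
  have hB := hS.posDef_sqrt
  have hAMGM := trace_le_trace_mul_inv_add hA.posDef_sqrt.isHermitian
    hB.posDef_sqrt.isHermitian hB.posDef_sqrt.isUnit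
  rwa [hA.posSemidef.sqrt_mul_self, hB.posSemidef.sqrt_mul_self, ← hmin] at hAMGM
end

section
/- The decomposition M(b̂_J − β⁰_J) = T̂_J^{-1/2}(X_J − X_{-J}Γ̂_J)ᵀε/√n − √n λ Ẑ_Jᵀ(β̂_{-J} − β⁰_{-J}) holds deterministically (as an algebraic identity), where the KKT conditions X_{-J}ᵀ(X_J − X_{-J}Γ̂_J)T̂_J^{-1/2}/n = λẐ_J are assumed. -/
/-!
Write `E := X_J − X_{-J}Γ̂_J` and `T̃_J = A X_J` with `A := Eᵀ/n`. Substituting the model into the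
residual, `Y − Xβ̂ = X_J(β⁰_J − β̂_J) + X_{-J}(β⁰_{-J} − β̂_{-J}) + ε`, so the one-step correction
`T̃_J^{-1}A(Y − Xβ̂)` cancels the `X_J`-part of the bias exactly: `T̃_J(b̂_J − β⁰_J) =
A(X_{-J}(β⁰_{-J} − β̂_{-J}) + ε)`. Multiplying by `√n W` with `W = T̂_J^{-1/2}` symmetric, the transposed
KKT conditions turn `W A X_{-J}` into `λẐ_Jᵀ`.
-/

open Matrix

section

variable {R : Type*} [CommRing R] {ι κ μ : Type*} [Fintype ι] [Fintype κ]

theorem mul_mulVec_add_nonsing_inv_mulVec_sub [DecidableEq κ]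
    {A : Matrix κ ι R} {X : Matrix ι κ R} (hAX : IsUnit (A * X).det) (β β₀ : κ → R) (r : ι → R) :
    (A * X) *ᵥ (β + (A * X)⁻¹ *ᵥ (A *ᵥ (X *ᵥ β₀ + r - X *ᵥ β)) - β₀) = A *ᵥ r := by
  rw [mulVec_sub, mulVec_add, mulVec_mulVec, mul_nonsing_inv _ hAX, one_mulVec, mulVec_sub,
    mulVec_add, ← mulVec_mulVec, ← mulVec_mulVec]
  abel

theorem mul_smul_transpose_mul_eq_smul_transpose_of_symm
    {B : Matrix ι μ R} {E : Matrix ι κ R} {W : Matrix κ κ R} {Z : Matrix μ κ R} {c a : R}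
    (hW : Wᵀ = W) (h : c • (Bᵀ * E * W) = a • Z) : W * (c • Eᵀ) * B = a • Zᵀ := by
  have := congrArg transpose h
  rwa [transpose_smul, transpose_smul, transpose_mul, transpose_mul, transpose_transpose, hW,
    ← Matrix.mul_assoc, ← smul_mul, ← Matrix.mul_smul] at this

end

theorem stmt_4_general {n q m : ℕ}
    (XJ : Matrix (Fin n) (Fin q) ℝ) (XmJ : Matrix (Fin n) (Fin m) ℝ)
    (βJ0 : Fin q → ℝ) (βmJ0 : Fin m → ℝ) (ε : Fin n → ℝ) (Y : Fin n → ℝ)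
    (hY : Y = XJ *ᵥ βJ0 + XmJ *ᵥ βmJ0 + ε)
    (Γ : Matrix (Fin m) (Fin q) ℝ) (lam : ℝ)
    (W : Matrix (Fin q) (Fin q) ℝ) (hWsymm : Wᵀ = W)
    (hT : IsUnit ((1 / (n : ℝ)) • ((XJ - XmJ * Γ)ᵀ * XJ)).det)
    (Zhat : Matrix (Fin m) (Fin q) ℝ)
    (hKKT : (1 / (n : ℝ)) • (XmJᵀ * (XJ - XmJ * Γ) * W) = lam • Zhat)
    (βhatJ : Fin q → ℝ) (βhatmJ : Fin m → ℝ) :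
    (Real.sqrt n • (W * ((1 / (n : ℝ)) • ((XJ - XmJ * Γ)ᵀ * XJ)))) *ᵥ
        ((βhatJ + ((1 / (n : ℝ)) • ((XJ - XmJ * Γ)ᵀ * XJ))⁻¹ *ᵥ
          ((1 / (n : ℝ)) • ((XJ - XmJ * Γ)ᵀ *ᵥ
            (Y - XJ *ᵥ βhatJ - XmJ *ᵥ βhatmJ)))) - βJ0) =
      (Real.sqrt n)⁻¹ • (W *ᵥ ((XJ - XmJ * Γ)ᵀ *ᵥ ε)) -
        (Real.sqrt n * lam) • (Zhatᵀ *ᵥ (βhatmJ - βmJ0)) := by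
  set E := XJ - XmJ * Γ
  set A := (1 / (n : ℝ)) • Eᵀ
  have hresid : Y - XJ *ᵥ βhatJ - XmJ *ᵥ βhatmJ
      = XJ *ᵥ βJ0 + (XmJ *ᵥ (βmJ0 - βhatmJ) + ε) - XJ *ᵥ βhatJ := by
    rw [hY, mulVec_sub]; abel
  have hWAX : W * A * XmJ = lam • Zhatᵀ :=
    mul_smul_transpose_mul_eq_smul_transpose_of_symm hWsymm hKKT
  have hAX : (1 / (n : ℝ)) • (Eᵀ * XJ) = A * XJ := (smul_mul _ _ _).symm
  rw [hAX, ← smul_mulVec, hresid, smul_mulVec, ← mulVec_mulVec,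
    mul_mulVec_add_nonsing_inv_mulVec_sub (hAX ▸ hT)]
  rw [mulVec_add, mulVec_add, mulVec_mulVec, mulVec_mulVec, hWAX, smul_mulVec, smul_mulVec,
    mulVec_smul, smul_add, smul_smul, smul_smul, mul_one_div, Real.sqrt_div_self,
    ← neg_sub βhatmJ, mulVec_neg, smul_neg]
  abel

/-- Deterministic decomposition of the de-sparsified estimator: with
`E := X_J − X_{-J}Γ̂_J`, `T̃_J := EᵀX_J/n`, `T̂_J := EᵀE/n`, `W := T̂_J^{-1/2}`,
`M := √n W T̃_J`, `b̂_J := β̂_J + T̃_J^{-1}Eᵀ(Y − Xβ̂)/n` and the KKT conditions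
`X_{-J}ᵀ E W/n = λẐ_J`, one has the algebraic identity
`M(b̂_J − β⁰_J) = W Eᵀε/√n − √n λ Ẑ_Jᵀ(β̂_{-J} − β⁰_{-J})`.
Here coordinates are split into the `q = |J|` coordinates in `J` (design `XJ`) and the
`m = p − |J|` remaining coordinates (design `XmJ`). -/
theorem stmt_4 {n q m : ℕ} (hn : 0 < n)
    (XJ : Matrix (Fin n) (Fin q) ℝ) (XmJ : Matrix (Fin n) (Fin m) ℝ)
    (βJ0 : Fin q → ℝ) (βmJ0 : Fin m → ℝ) (ε : Fin n → ℝ) (Y : Fin n → ℝ)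
    (hY : Y = XJ *ᵥ βJ0 + XmJ *ᵥ βmJ0 + ε)
    (Γ : Matrix (Fin m) (Fin q) ℝ) (lam : ℝ)
    (W : Matrix (Fin q) (Fin q) ℝ) (hWsymm : Wᵀ = W)
    (hW : W * ((1 / (n : ℝ)) • ((XJ - XmJ * Γ)ᵀ * (XJ - XmJ * Γ))) * W = 1)
    (hT : IsUnit ((1 / (n : ℝ)) • ((XJ - XmJ * Γ)ᵀ * XJ)).det)
    (Zhat : Matrix (Fin m) (Fin q) ℝ)
    (hKKT : (1 / (n : ℝ)) • (XmJᵀ * (XJ - XmJ * Γ) * W) = lam • Zhat)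
    (βhatJ : Fin q → ℝ) (βhatmJ : Fin m → ℝ) :
    (Real.sqrt n • (W * ((1 / (n : ℝ)) • ((XJ - XmJ * Γ)ᵀ * XJ)))) *ᵥ
        ((βhatJ + ((1 / (n : ℝ)) • ((XJ - XmJ * Γ)ᵀ * XJ))⁻¹ *ᵥ
          ((1 / (n : ℝ)) • ((XJ - XmJ * Γ)ᵀ *ᵥ
            (Y - XJ *ᵥ βhatJ - XmJ *ᵥ βhatmJ)))) - βJ0) =
      (Real.sqrt n)⁻¹ • (W *ᵥ ((XJ - XmJ * Γ)ᵀ *ᵥ ε)) -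
        (Real.sqrt n * lam) • (Zhatᵀ *ᵥ (βhatmJ - βmJ0)) :=
  stmt_4_general XJ XmJ βJ0 βmJ0 ε Y hY Γ lam W hWsymm hT Zhat hKKT βhatJ βhatmJ
end

section
/- Let β̂ be the square-root Lasso with tuning parameter λ₀, ε := Y − Xβ⁰, ε̂ := Y − Xβ̂. Suppose for some 0 < η < 1, R > 0, σ̲ > 0: λ₀(1−η) ≥ R and λ₀‖β⁰‖₁/σ̲ ≤ 2(√(1+(η/2)²) − 1). Then on the event {‖Xᵀε‖_∞/(n‖ε‖_n) ≤ R and ‖ε‖_n ≥ σ̲} one has |‖ε̂‖_n/‖ε‖_n − 1| ≤ η. -/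
open BigOperators Matrix

set_option maxHeartbeats 1000000 in
/-- Consistency of the square-root Lasso noise estimate: if `λ₀(1−η) ≥ R` and
`λ₀‖β⁰‖₁/σ̲ ≤ 2(√(1+(η/2)²) − 1)` for some `0<η<1`, `R>0`, `σ̲>0`, then on the event
`{‖Xᵀε‖_∞/(n‖ε‖_n) ≤ R, ‖ε‖_n ≥ σ̲}` one has `|‖ε̂‖_n/‖ε‖_n − 1| ≤ η`, where
`ε̂ = Y − Xβ̂` with `β̂` the square-root Lasso and `Y = Xβ⁰ + ε`. -/
theorem stmt_8 {n p : ℕ} (X : Matrix (Fin n) (Fin p) ℝ)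
    (β0 : Fin p → ℝ) (ε : Fin n → ℝ) (Y : Fin n → ℝ)
    (hY : Y = X *ᵥ β0 + ε)
    (lam0 : ℝ) (hlam0 : 0 < lam0) (βhat : Fin p → ℝ)
    (hmin : ∀ β : Fin p → ℝ,
      Real.sqrt ((∑ i, (Y - X *ᵥ βhat) i ^ 2) / n) + lam0 * ∑ j, |βhat j| ≤
      Real.sqrt ((∑ i, (Y - X *ᵥ β) i ^ 2) / n) + lam0 * ∑ j, |β j|)
    (η R σlow : ℝ) (hη0 : 0 < η) (hη1 : η < 1) (hR : 0 < R) (hσ : 0 < σlow)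
    (hlamR : R ≤ lam0 * (1 - η))
    (hsparse : lam0 * (∑ j, |β0 j|) / σlow ≤ 2 * (Real.sqrt (1 + (η / 2) ^ 2) - 1))
    (hevR : ∀ j, |∑ i, X i j * ε i| / ((n : ℝ) * Real.sqrt ((∑ i, ε i ^ 2) / n)) ≤ R)
    (hevσ : σlow ≤ Real.sqrt ((∑ i, ε i ^ 2) / n)) :
    |Real.sqrt ((∑ i, (Y - X *ᵥ βhat) i ^ 2) / n) /
        Real.sqrt ((∑ i, ε i ^ 2) / n) - 1| ≤ η := by
  have hn : 0 < n := by
    rcases Nat.eq_zero_or_pos n with h0 | h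
    · exfalso; subst h0; simp at hevσ; linarith
    · exact h
  have hnR : (0:ℝ) < n := by exact_mod_cast hn
  have hYε : (Y - X *ᵥ β0) = ε := by rw [hY]; abel
  set s : ℝ := Real.sqrt (1 + (η / 2) ^ 2) with hsdef
  have hs2 : s ^ 2 = 1 + (η / 2) ^ 2 := Real.sq_sqrt (by positivity)
  have hs0 : 0 ≤ s := Real.sqrt_nonneg _
  set Bh : ℝ := ∑ j, |βhat j| with hBhdef
  have hBh : 0 ≤ Bh := Finset.sum_nonneg fun j _ => abs_nonneg _
  set B0 : ℝ := ∑ j, |β0 j| with hB0def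
  have hB0 : 0 ≤ B0 := Finset.sum_nonneg fun j _ => abs_nonneg _
  set σh : ℝ := Real.sqrt ((∑ i, (Y - X *ᵥ βhat) i ^ 2) / n) with hσhdef
  have hσh0 : 0 ≤ σh := Real.sqrt_nonneg _
  have hSh : σh ^ 2 = (∑ i, (Y - X *ᵥ βhat) i ^ 2) / n := Real.sq_sqrt (by positivity)
  have hSh' : (∑ i, (Y - X *ᵥ βhat) i ^ 2) = n * σh ^ 2 := by
    rw [hSh]; field_simp
  set σ : ℝ := Real.sqrt ((∑ i, ε i ^ 2) / n) with hσdef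
  have hσpos : 0 < σ := lt_of_lt_of_le hσ hevσ
  have hSε : σ ^ 2 = (∑ i, ε i ^ 2) / n := Real.sq_sqrt (by positivity)
  have hSε' : (∑ i, ε i ^ 2) = n * σ ^ 2 := by
    rw [hSε]; field_simp
  -- basic inequality
  have hbasic : σh + lam0 * Bh ≤ σ + lam0 * B0 := by
    have := hmin β0
    rwa [hYε] at this
  clear_value σ σh s B0 Bh
  -- sqrt bound : s ≤ 1 + η²/8
  have hsle : s ≤ 1 + η ^ 2 / 8 := by
    have e1 : (1:ℝ) + (η / 2) ^ 2 ≤ (1 + η ^ 2 / 8) ^ 2 := by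
      have e2 : (1 + η ^ 2 / 8) ^ 2 = 1 + (η / 2) ^ 2 + (η ^ 2) ^ 2 / 64 := by ring
      have e3 := sq_nonneg (η ^ 2)
      linarith
    calc s ≤ Real.sqrt ((1 + η ^ 2 / 8) ^ 2) := by
            rw [hsdef]; exact Real.sqrt_le_sqrt e1
      _ = 1 + η ^ 2 / 8 := Real.sqrt_sq (by positivity)
  have hs1 : 1 ≤ s := by
    have h1 : Real.sqrt 1 ≤ s := by
      rw [hsdef]; exact Real.sqrt_le_sqrt (by linarith [sq_nonneg (η / 2)])
    rwa [Real.sqrt_one] at h1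
  -- sparsity bound : λ₀ B0 ≤ (η²/4) σ
  have hsp1 : lam0 * B0 ≤ 2 * (s - 1) * σlow := by
    rw [div_le_iff₀ hσ] at hsparse; linarith
  have hsp2 : lam0 * B0 ≤ (η ^ 2 / 4) * σ := by
    have h1 : 2 * (s - 1) * σlow ≤ 2 * (s - 1) * σ :=
      mul_le_mul_of_nonneg_left hevσ (by linarith)
    have h2 : 2 * (s - 1) ≤ η ^ 2 / 4 := by linarith
    have h3 := mul_le_mul_of_nonneg_right h2 hσpos.le
    linarith
  -- Cauchy–Schwarz : ∑ ε ε̂ ≤ n σ σh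
  have hCS : ∑ i, ε i * (Y - X *ᵥ βhat) i ≤ n * (σ * σh) := by
    have hcs := Real.sum_mul_le_sqrt_mul_sqrt Finset.univ ε (fun i => (Y - X *ᵥ βhat) i)
    have h1 : Real.sqrt (∑ i, ε i ^ 2) = Real.sqrt n * σ := by
      rw [hSε', Real.sqrt_mul (by positivity), Real.sqrt_sq hσpos.le]
    have h2 : Real.sqrt (∑ i, (Y - X *ᵥ βhat) i ^ 2) = Real.sqrt n * σh := by
      rw [hSh', Real.sqrt_mul (by positivity), Real.sqrt_sq hσh0]
    have h3 : Real.sqrt n * Real.sqrt n = n := Real.mul_self_sqrt (by positivity)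
    calc ∑ i, ε i * (Y - X *ᵥ βhat) i
        ≤ Real.sqrt (∑ i, ε i ^ 2) * Real.sqrt (∑ i, (Y - X *ᵥ βhat) i ^ 2) := hcs
      _ = (Real.sqrt n * Real.sqrt n) * (σ * σh) := by rw [h1, h2]; ring
      _ = n * (σ * σh) := by rw [h3]
  -- inner product with X(β̂-β0)
  have hinner : ∑ i, ε i * (ε i - (Y - X *ᵥ βhat) i)
      = ∑ j, (βhat j - β0 j) * (∑ i, X i j * ε i) := by
    have hdiff : ∀ i, ε i - (Y - X *ᵥ βhat) i = ∑ j, X i j * (βhat j - β0 j) := by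
      intro i
      simp only [hY, Pi.sub_apply, Pi.add_apply, Matrix.mulVec, dotProduct,
        mul_sub, Finset.sum_sub_distrib]
      ring
    simp only [hdiff, Finset.mul_sum]
    rw [Finset.sum_comm]
    exact Finset.sum_congr rfl fun j _ => Finset.sum_congr rfl fun i _ => by ring
  -- event bound
  have hXe : ∀ j, |∑ i, X i j * ε i| ≤ R * (n * σ) := by
    intro j
    have := hevR j
    rwa [div_le_iff₀ (by positivity)] at this
  have hinnerle : ∑ i, ε i * (ε i - (Y - X *ᵥ βhat) i)
      ≤ (∑ j, |βhat j - β0 j|) * (R * (n * σ)) := by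
    rw [hinner]
    have hterm : ∀ j ∈ Finset.univ, (βhat j - β0 j) * (∑ i, X i j * ε i)
        ≤ |βhat j - β0 j| * (R * (n * σ)) := by
      intro j _
      calc (βhat j - β0 j) * (∑ i, X i j * ε i)
          ≤ |(βhat j - β0 j) * (∑ i, X i j * ε i)| := le_abs_self _
        _ = |βhat j - β0 j| * |∑ i, X i j * ε i| := abs_mul _ _
        _ ≤ |βhat j - β0 j| * (R * (n * σ)) :=
            mul_le_mul_of_nonneg_left (hXe j) (abs_nonneg _)
    calc ∑ j, (βhat j - β0 j) * (∑ i, X i j * ε i)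
        ≤ ∑ j, |βhat j - β0 j| * (R * (n * σ)) := Finset.sum_le_sum hterm
      _ = (∑ j, |βhat j - β0 j|) * (R * (n * σ)) := by rw [← Finset.sum_mul]
  set Dn : ℝ := ∑ j, |βhat j - β0 j| with hDndef
  have hDn0 : 0 ≤ Dn := Finset.sum_nonneg fun j _ => abs_nonneg _
  have hDnle : Dn ≤ Bh + B0 := by
    rw [hDndef, hBhdef, hB0def, ← Finset.sum_add_distrib]
    exact Finset.sum_le_sum fun j _ => abs_sub _ _
  clear_value Dn
  -- expand left side
  have hexp : ∑ i, ε i * (ε i - (Y - X *ᵥ βhat) i)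
      = n * σ ^ 2 - ∑ i, ε i * (Y - X *ᵥ βhat) i := by
    simp only [mul_sub, Finset.sum_sub_distrib]
    rw [← hSε']
    congr 1
    exact Finset.sum_congr rfl fun i _ => by ring
  -- key lower bound
  have hkey : (n : ℝ) * σ * (σ - σh) ≤ Dn * (R * (n * σ)) := by
    have h4 := hinnerle
    rw [hexp] at h4
    have e1 : (n : ℝ) * σ * (σ - σh) = n * σ ^ 2 - n * (σ * σh) := by ring
    linarith
  have hkey2 : σ - σh ≤ R * Dn := by
    have hpos : (0:ℝ) < n * σ := by positivity
    have e2 : Dn * (R * (n * σ)) = (n * σ) * (R * Dn) := by ring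
    have e3 : (n : ℝ) * σ * (σ - σh) = (n * σ) * (σ - σh) := by ring
    rw [e2, e3] at hkey
    exact le_of_mul_le_mul_left hkey hpos
  -- lower bound : (1-η) σ ≤ σh
  have hlower : (1 - η) * σ ≤ σh := by
    rcases le_or_gt σ σh with h | h
    · have := mul_nonneg hη0.le hσpos.le
      have e : (1 - η) * σ = σ - η * σ := by ring
      linarith
    · have hDn2 : lam0 * Dn ≤ (σ - σh) + 2 * (lam0 * B0) := by
        have h5 := mul_le_mul_of_nonneg_left hDnle hlam0.le
        rw [mul_add] at h5
        linarith
      have hRDn : lam0 * (σ - σh) ≤ R * ((σ - σh) + 2 * (lam0 * B0)) := by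
        calc lam0 * (σ - σh) ≤ lam0 * (R * Dn) :=
              mul_le_mul_of_nonneg_left hkey2 hlam0.le
          _ = R * (lam0 * Dn) := by ring
          _ ≤ R * ((σ - σh) + 2 * (lam0 * B0)) :=
              mul_le_mul_of_nonneg_left hDn2 hR.le
      have hRs : R * (σ - σh) ≤ lam0 * (1 - η) * (σ - σh) :=
        mul_le_mul_of_nonneg_right hlamR (by linarith)
      have hRl : R ≤ lam0 := by
        have := mul_pos hlam0 hη0
        have e : lam0 * (1 - η) = lam0 - lam0 * η := by ring
        linarith
      have hRB : R * (lam0 * B0) ≤ lam0 * ((η ^ 2 / 4) * σ) :=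
        mul_le_mul hRl hsp2 (by positivity) hlam0.le
      have h5 : lam0 * (η * (σ - σh)) ≤ lam0 * (η * (η * σ / 2)) := by linarith
      have h6 : η * (σ - σh) ≤ η * (η * σ / 2) := le_of_mul_le_mul_left h5 hlam0
      have h7 : σ - σh ≤ η * σ / 2 := le_of_mul_le_mul_left h6 hη0
      have h8 := mul_nonneg hη0.le hσpos.le
      have e : (1 - η) * σ = σ - η * σ := by ring
      linarith
  -- upper bound : σh ≤ (1+η) σ
  have hupper : σh ≤ (1 + η) * σ := by
    have h8 : η ^ 2 / 4 ≤ η := by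
      have h := mul_le_mul_of_nonneg_left hη1.le hη0.le
      rw [mul_one] at h
      have e : η ^ 2 = η * η := sq η
      linarith
    have h9 := mul_le_mul_of_nonneg_right h8 hσpos.le
    have h10 := mul_nonneg hlam0.le hBh
    linarith
  rw [abs_le]
  constructor
  · rw [le_sub_iff_add_le, le_div_iff₀ hσpos]; linarith
  · rw [sub_le_iff_le_add, div_le_iff₀ hσpos]; linarith
end

section
/- Under the conditions of the lower-bound lemma for the square-root Lasso (λ₀(1−η) ≥ R, λ₀‖β⁰‖₁/σ̲ ≤ 2(√(1+(η/2)²)−1), 0<η<1), on the event {‖Xᵀε‖_∞/(n‖ε‖_n) ≤ R and ‖ε‖_n ≥ σ̲}, the prediction error of the square-root Lasso satisfies ‖X(β̂ − β⁰)‖_n ≤ η‖ε‖_n. -/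
open BigOperators Matrix

noncomputable def Msr {n : ℕ} (v : Fin n → ℝ) : ℝ := Real.sqrt (∑ i, v i ^ 2)

lemma Msr_nonneg {n : ℕ} (v : Fin n → ℝ) : 0 ≤ Msr v := Real.sqrt_nonneg _

lemma Msr_sq {n : ℕ} (v : Fin n → ℝ) : Msr v ^ 2 = ∑ i, v i ^ 2 :=
  Real.sq_sqrt (by positivity)

lemma Msr_cs {n : ℕ} (a b : Fin n → ℝ) : ∑ i, a i * b i ≤ Msr a * Msr b := by
  have h := Finset.sum_mul_sq_le_sq_mul_sq Finset.univ a b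
  calc ∑ i, a i * b i ≤ |∑ i, a i * b i| := le_abs_self _
    _ = Real.sqrt ((∑ i, a i * b i) ^ 2) := (Real.sqrt_sq_eq_abs _).symm
    _ ≤ Real.sqrt ((∑ i, a i ^ 2) * (∑ i, b i ^ 2)) := Real.sqrt_le_sqrt h
    _ = Msr a * Msr b := by
        rw [Real.sqrt_mul (by positivity)]; rfl

lemma Msr_add_le {n : ℕ} (a b : Fin n → ℝ) : Msr (a + b) ≤ Msr a + Msr b := by
  have cs := Msr_cs a b
  have key : ∑ i, (a + b) i ^ 2 ≤ (Msr a + Msr b) ^ 2 := by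
    have expand : ∑ i, (a + b) i ^ 2
        = (∑ i, a i ^ 2) + 2 * (∑ i, a i * b i) + ∑ i, b i ^ 2 := by
      rw [Finset.mul_sum, ← Finset.sum_add_distrib, ← Finset.sum_add_distrib]
      exact Finset.sum_congr rfl (fun i _ => by simp [Pi.add_apply]; ring)
    have ha := Msr_sq a; have hb := Msr_sq b
    nlinarith [Msr_nonneg a, Msr_nonneg b]
  calc Msr (a + b) = Real.sqrt (∑ i, (a + b) i ^ 2) := rfl
    _ ≤ Real.sqrt ((Msr a + Msr b) ^ 2) := Real.sqrt_le_sqrt key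
    _ = Msr a + Msr b := Real.sqrt_sq (by
        have := Msr_nonneg a; have := Msr_nonneg b; linarith)

lemma Msr_smul {n : ℕ} (c : ℝ) (hc : 0 ≤ c) (v : Fin n → ℝ) :
    Msr (c • v) = c * Msr v := by
  unfold Msr
  simp only [Pi.smul_apply, smul_eq_mul, mul_pow]
  rw [← Finset.mul_sum, Real.sqrt_mul (by positivity), Real.sqrt_sq hc]

theorem corelem (η c e A L : ℝ) (hη0 : 0<η) (hη1 : η<1) (he : 0 < e)
    (hc : c^2+4*c = η^2) (hc0 : 0 ≤ c)
    (hA0 : 0 ≤ A) (hAc : A ≤ c*e) (hL0 : 0 ≤ L) (hL : L ≤ 2*A+η*e)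
    (h1 : η^2*e^2 ≤ L^2+(4-2*η)*e*L)
    (h2 : η^2*e^2 ≤ 4*A*e-2*η*e*L+(2*A-L)^2) : False := by
  have hcpos : 0 < c := by nlinarith
  have hc4 : c < 1/4 := by nlinarith
  have key : 0 ≤ e - A - c*e + L := by nlinarith
  have h2' : η^2*e^2 ≤ 4*(c*e)*e - 2*η*e*L + (2*(c*e)-L)^2 := by
    nlinarith [mul_nonneg (sub_nonneg.2 hAc) key]
  rcases le_or_gt (c*e) L with h | h
  · nlinarith [mul_pos hcpos (mul_pos hη0 (mul_pos he he)),
      mul_nonneg (sub_nonneg.2 h) (show 0 ≤ 3*c*e + 2*η*e - L by nlinarith)]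
  · nlinarith [mul_pos hcpos (mul_pos hη0 (mul_pos he he)),
      mul_nonneg (sub_nonneg.2 h.le) (show 0 ≤ L + c*e + (4-2*η)*e by nlinarith)]

set_option maxHeartbeats 1600000 in
/-- Prediction error of the square-root Lasso: under `λ₀(1−η) ≥ R` and the
ℓ₁-sparsity condition `λ₀‖β⁰‖₁/σ̲ ≤ 2(√(1+(η/2)²) − 1)`, `0<η<1`, on the event
`{‖Xᵀε‖_∞/(n‖ε‖_n) ≤ R, ‖ε‖_n ≥ σ̲}` one has `‖X(β̂ − β⁰)‖_n ≤ η‖ε‖_n`. -/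
theorem stmt_9 {n p : ℕ} (X : Matrix (Fin n) (Fin p) ℝ)
    (β0 : Fin p → ℝ) (ε : Fin n → ℝ) (Y : Fin n → ℝ)
    (hY : Y = X *ᵥ β0 + ε)
    (lam0 : ℝ) (hlam0 : 0 < lam0) (βhat : Fin p → ℝ)
    (hmin : ∀ β : Fin p → ℝ,
      Real.sqrt ((∑ i, (Y - X *ᵥ βhat) i ^ 2) / n) + lam0 * ∑ j, |βhat j| ≤
      Real.sqrt ((∑ i, (Y - X *ᵥ β) i ^ 2) / n) + lam0 * ∑ j, |β j|)
    (η R σlow : ℝ) (hη0 : 0 < η) (hη1 : η < 1) (hR : 0 < R) (hσ : 0 < σlow)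
    (hlamR : R ≤ lam0 * (1 - η))
    (hsparse : lam0 * (∑ j, |β0 j|) / σlow ≤ 2 * (Real.sqrt (1 + (η / 2) ^ 2) - 1))
    (hevR : ∀ j, |∑ i, X i j * ε i| / ((n : ℝ) * Real.sqrt ((∑ i, ε i ^ 2) / n)) ≤ R)
    (hevσ : σlow ≤ Real.sqrt ((∑ i, ε i ^ 2) / n)) :
    Real.sqrt ((∑ i, (X *ᵥ (βhat - β0)) i ^ 2) / n) ≤
      η * Real.sqrt ((∑ i, ε i ^ 2) / n) := by
  have nform : ∀ v : Fin n → ℝ,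
      Real.sqrt ((∑ i, v i ^ 2) / (n : ℝ)) = Msr v / Real.sqrt n := fun v => by
    rw [Real.sqrt_div (by positivity : (0:ℝ) ≤ ∑ i, v i ^ 2)]; rfl
  rcases Nat.eq_zero_or_pos n with hn | hn
  · exfalso
    rw [show ((n:ℝ)) = 0 by simp [hn], div_zero, Real.sqrt_zero] at hevσ
    linarith
  have hm : (0:ℝ) < n := by exact_mod_cast hn
  have hs : 0 < Real.sqrt n := Real.sqrt_pos.2 hm
  have hs2 : Real.sqrt n ^ 2 = (n:ℝ) := Real.sq_sqrt hm.le
  -- the noise level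
  have he : Real.sqrt n * σlow ≤ Msr ε := by
    rw [nform ε] at hevσ
    calc Real.sqrt n * σlow ≤ Real.sqrt n * (Msr ε / Real.sqrt n) :=
          mul_le_mul_of_nonneg_left hevσ hs.le
      _ = Msr ε := by field_simp
  have he0 : 0 < Msr ε := lt_of_lt_of_le (by positivity) he
  rw [nform, nform, show η * (Msr ε / Real.sqrt n) = (η * Msr ε) / Real.sqrt n by ring,
    div_le_div_iff_of_pos_right hs]
  by_contra hcon
  push_neg at hcon
  have ht0 : 0 < Msr (X *ᵥ (βhat - β0)) := lt_trans (by positivity) hcon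
  obtain ⟨α, hα0, hα1, hαt⟩ :
      ∃ α : ℝ, 0 < α ∧ α < 1 ∧ α * Msr (X *ᵥ (βhat - β0)) = η * Msr ε :=
    ⟨η * Msr ε / Msr (X *ᵥ (βhat - β0)), by positivity, (div_lt_one ht0).2 hcon,
      div_mul_cancel₀ _ ht0.ne'⟩
  obtain ⟨b, hb_def⟩ : ∃ b : Fin p → ℝ, b = α • (βhat - β0) := ⟨_, rfl⟩
  -- norm of X b
  have hu : Msr (X *ᵥ b) = η * Msr ε := by
    rw [hb_def, Matrix.mulVec_smul, Msr_smul α hα0.le, hαt]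
  -- Y - X β0 = ε
  have hYβ0 : Y - X *ᵥ β0 = ε := by rw [hY]; exact add_sub_cancel_left _ _
  -- basic inequality for βhat
  have hb0 := hmin β0
  rw [nform, nform, hYβ0] at hb0
  -- residual identity
  have hveq : Y - X *ᵥ (β0 + b) = ε - X *ᵥ b := by
    rw [hY, Matrix.mulVec_add]; abel
  -- convexity of the residual norm
  have hcomb : Y - X *ᵥ (β0 + b) =
      α • (Y - X *ᵥ βhat) + (1 - α) • (Y - X *ᵥ β0) := by
    have hβt : β0 + b = α • βhat + (1 - α) • β0 := by
      funext j
      simp only [hb_def, Pi.add_apply, Pi.smul_apply, Pi.sub_apply, smul_eq_mul]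
      ring
    rw [hβt, Matrix.mulVec_add, Matrix.mulVec_smul, Matrix.mulVec_smul]
    funext i
    simp only [Pi.add_apply, Pi.sub_apply, Pi.smul_apply, smul_eq_mul]
    ring
  have hMconv : Msr (ε - X *ᵥ b) ≤
      α * Msr (Y - X *ᵥ βhat) + (1 - α) * Msr ε := by
    rw [← hveq, hcomb]
    calc Msr (α • (Y - X *ᵥ βhat) + (1 - α) • (Y - X *ᵥ β0))
        ≤ Msr (α • (Y - X *ᵥ βhat)) + Msr ((1 - α) • (Y - X *ᵥ β0)) :=
          Msr_add_le _ _
      _ = α * Msr (Y - X *ᵥ βhat) + (1 - α) * Msr ε := by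
          rw [Msr_smul _ hα0.le, Msr_smul _ (by linarith), hYβ0]
  -- convexity of the l1 norm
  have hl1conv : ∑ j, |(β0 + b) j| ≤
      α * ∑ j, |βhat j| + (1 - α) * ∑ j, |β0 j| := by
    rw [Finset.mul_sum, Finset.mul_sum, ← Finset.sum_add_distrib]
    refine Finset.sum_le_sum (fun j _ => ?_)
    have hj : (β0 + b) j = α * βhat j + (1 - α) * β0 j := by
      simp only [hb_def, Pi.add_apply, Pi.smul_apply, Pi.sub_apply, smul_eq_mul]
      ring
    rw [hj]
    calc |α * βhat j + (1 - α) * β0 j| ≤ |α * βhat j| + |(1 - α) * β0 j| :=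
          abs_add_le _ _
      _ = α * |βhat j| + (1 - α) * |β0 j| := by
          rw [abs_mul, abs_mul, abs_of_nonneg hα0.le,
            abs_of_nonneg (by linarith : (0:ℝ) ≤ 1 - α)]
  -- scaled basic inequality at the convex combination
  have hb0s : Msr (Y - X *ᵥ βhat) + Real.sqrt n * (lam0 * ∑ j, |βhat j|) ≤
      Msr ε + Real.sqrt n * (lam0 * ∑ j, |β0 j|) := by
    have h := mul_le_mul_of_nonneg_left hb0 hs.le
    rw [mul_add, mul_add, mul_div_cancel₀ _ hs.ne', mul_div_cancel₀ _ hs.ne'] at h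
    linarith
  have hbasic2 : Msr (ε - X *ᵥ b) + Real.sqrt n * (lam0 * ∑ j, |(β0 + b) j|) ≤
      Msr ε + Real.sqrt n * (lam0 * ∑ j, |β0 j|) := by
    have h1 := mul_le_mul_of_nonneg_left hb0s hα0.le
    have h2 := mul_le_mul_of_nonneg_left hl1conv
      (by positivity : (0:ℝ) ≤ Real.sqrt n * lam0)
    linarith [hMconv]
  -- expansion of the residual norm
  have hexp : Msr (ε - X *ᵥ b) ^ 2 =
      Msr ε ^ 2 - 2 * (∑ i, ε i * (X *ᵥ b) i) + (η * Msr ε) ^ 2 := by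
    have h1 : Msr (ε - X *ᵥ b) ^ 2 = ∑ i, (ε i - (X *ᵥ b) i) ^ 2 := by
      rw [Msr_sq]
      exact Finset.sum_congr rfl (fun i _ => by simp [Pi.sub_apply])
    have h2 : ∑ i, (ε i - (X *ᵥ b) i) ^ 2 =
        (∑ i, ε i ^ 2) - 2 * (∑ i, ε i * (X *ᵥ b) i) + ∑ i, (X *ᵥ b) i ^ 2 := by
      rw [Finset.mul_sum, ← Finset.sum_sub_distrib, ← Finset.sum_add_distrib]
      exact Finset.sum_congr rfl (fun i _ => by ring)
    rw [h1, h2, ← Msr_sq ε, ← Msr_sq (X *ᵥ b), hu]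
  -- Hölder bound on the cross term
  have hWrow : ∑ i, ε i * (X *ᵥ b) i = ∑ j, (∑ i, X i j * ε i) * b j := by
    have hv : ∀ i, (X *ᵥ b) i = ∑ j, X i j * b j := fun i => by
      simp [Matrix.mulVec, dotProduct]
    calc ∑ i, ε i * (X *ᵥ b) i = ∑ i, ∑ j, ε i * (X i j * b j) := by
          refine Finset.sum_congr rfl (fun i _ => ?_)
          rw [hv i, Finset.mul_sum]
      _ = ∑ j, ∑ i, ε i * (X i j * b j) := Finset.sum_comm
      _ = ∑ j, (∑ i, X i j * ε i) * b j := by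
          refine Finset.sum_congr rfl (fun j _ => ?_)
          rw [Finset.sum_mul]
          exact Finset.sum_congr rfl (fun i _ => by ring)
  have hcol : ∀ j, |∑ i, X i j * ε i| ≤ R * (Real.sqrt n * Msr ε) := by
    intro j
    have h := hevR j
    rw [nform ε] at h
    have hpos : (0:ℝ) < (n:ℝ) * (Msr ε / Real.sqrt n) := by positivity
    have h2 := (div_le_iff₀ hpos).1 h
    calc |∑ i, X i j * ε i| ≤ R * ((n:ℝ) * (Msr ε / Real.sqrt n)) := h2
      _ = R * ((n:ℝ) / Real.sqrt n * Msr ε) := by ring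
      _ = R * (Real.sqrt n * Msr ε) := by rw [Real.div_sqrt]
  have hW : |∑ i, ε i * (X *ᵥ b) i| ≤
      (1 - η) * Msr ε * (Real.sqrt n * (lam0 * ∑ j, |b j|)) := by
    rw [hWrow]
    calc |∑ j, (∑ i, X i j * ε i) * b j|
        ≤ ∑ j, |(∑ i, X i j * ε i) * b j| := Finset.abs_sum_le_sum_abs _ _
      _ = ∑ j, |∑ i, X i j * ε i| * |b j| := by
          exact Finset.sum_congr rfl (fun j _ => abs_mul _ _)
      _ ≤ ∑ j, (R * (Real.sqrt n * Msr ε)) * |b j| :=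
          Finset.sum_le_sum (fun j _ =>
            mul_le_mul_of_nonneg_right (hcol j) (abs_nonneg _))
      _ = R * (Real.sqrt n * Msr ε) * ∑ j, |b j| := by
          rw [← Finset.mul_sum]
      _ ≤ (lam0 * (1 - η)) * (Real.sqrt n * Msr ε) * ∑ j, |b j| := by
          apply mul_le_mul_of_nonneg_right
            (mul_le_mul_of_nonneg_right hlamR (by positivity))
            (by positivity)
      _ = (1 - η) * Msr ε * (Real.sqrt n * (lam0 * ∑ j, |b j|)) := by ring
  -- triangle inequality: lower bound on residual norm
  have htri : Msr ε ≤ Msr (ε - X *ᵥ b) + η * Msr ε := by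
    have hε : ε = (ε - X *ᵥ b) + X *ᵥ b := by abel
    calc Msr ε = Msr ((ε - X *ᵥ b) + X *ᵥ b) := by rw [← hε]
      _ ≤ Msr (ε - X *ᵥ b) + Msr (X *ᵥ b) := Msr_add_le _ _
      _ = Msr (ε - X *ᵥ b) + η * Msr ε := by rw [hu]
  -- l1 triangle inequalities
  have hl1a : (∑ j, |β0 j|) - (∑ j, |b j|) ≤ ∑ j, |(β0 + b) j| := by
    rw [← Finset.sum_sub_distrib]
    refine Finset.sum_le_sum (fun j _ => ?_)
    have h := abs_add_le ((β0 + b) j) (-(b j))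
    rw [abs_neg] at h
    simp only [Pi.add_apply] at h ⊢
    rw [show β0 j + b j + -(b j) = β0 j by ring] at h
    linarith
  have hl1b : (∑ j, |b j|) - (∑ j, |β0 j|) ≤ ∑ j, |(β0 + b) j| := by
    rw [← Finset.sum_sub_distrib]
    refine Finset.sum_le_sum (fun j _ => ?_)
    have h := abs_add_le ((β0 + b) j) (-(β0 j))
    rw [abs_neg] at h
    simp only [Pi.add_apply] at h ⊢
    rw [show β0 j + b j + -(β0 j) = b j by ring] at h
    linarith
  have hl1c : (∑ j, |b j|) ≤ (∑ j, |(β0 + b) j|) + ∑ j, |β0 j| := by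
    rw [← Finset.sum_add_distrib]
    refine Finset.sum_le_sum (fun j _ => ?_)
    have h := abs_add_le ((β0 + b) j) (-(β0 j))
    rw [abs_neg] at h
    simp only [Pi.add_apply] at h ⊢
    rw [show β0 j + b j + -(β0 j) = b j by ring] at h
    linarith
  -- scaled l1 facts
  have hsl0 : (0:ℝ) ≤ Real.sqrt n * lam0 := by positivity
  have hl1a' := mul_le_mul_of_nonneg_left hl1a hsl0
  have hl1b' := mul_le_mul_of_nonneg_left hl1b hsl0
  have hl1c' := mul_le_mul_of_nonneg_left hl1c hsl0
  -- sparsity bound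
  have hc0 : (0:ℝ) ≤ 2 * (Real.sqrt (1 + (η / 2) ^ 2) - 1) := by
    have h2 : Real.sqrt 1 ≤ Real.sqrt (1 + (η / 2) ^ 2) :=
      Real.sqrt_le_sqrt (show (1:ℝ) ≤ 1 + (η / 2) ^ 2 by nlinarith)
    rw [Real.sqrt_one] at h2
    linarith
  have hcsq : (2 * (Real.sqrt (1 + (η / 2) ^ 2) - 1)) ^ 2
      + 4 * (2 * (Real.sqrt (1 + (η / 2) ^ 2) - 1)) = η ^ 2 := by
    have hq := Real.sq_sqrt (show (0:ℝ) ≤ 1 + (η / 2) ^ 2 by positivity)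
    linear_combination 4 * hq
  have hA : Real.sqrt n * (lam0 * ∑ j, |β0 j|) ≤
      (2 * (Real.sqrt (1 + (η / 2) ^ 2) - 1)) * Msr ε := by
    have h1 : lam0 * ∑ j, |β0 j| ≤ (2 * (Real.sqrt (1 + (η / 2) ^ 2) - 1)) * σlow :=
      (div_le_iff₀ hσ).1 hsparse
    calc Real.sqrt n * (lam0 * ∑ j, |β0 j|)
        ≤ Real.sqrt n * ((2 * (Real.sqrt (1 + (η / 2) ^ 2) - 1)) * σlow) :=
          mul_le_mul_of_nonneg_left h1 hs.le
      _ = (2 * (Real.sqrt (1 + (η / 2) ^ 2) - 1)) * (Real.sqrt n * σlow) := by ring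
      _ ≤ (2 * (Real.sqrt (1 + (η / 2) ^ 2) - 1)) * Msr ε :=
          mul_le_mul_of_nonneg_left he hc0
  -- nonnegativity facts
  have hv0 : 0 ≤ Msr (ε - X *ᵥ b) := Msr_nonneg _
  have hΛ0 : (0:ℝ) ≤ Real.sqrt n * (lam0 * ∑ j, |b j|) :=
    mul_nonneg hs.le (mul_nonneg hlam0.le (Finset.sum_nonneg fun j _ => abs_nonneg _))
  have hA0 : (0:ℝ) ≤ Real.sqrt n * (lam0 * ∑ j, |β0 j|) :=
    mul_nonneg hs.le (mul_nonneg hlam0.le (Finset.sum_nonneg fun j _ => abs_nonneg _))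
  -- upper bounds on the residual norm
  have hvup1 : Msr (ε - X *ᵥ b) ≤ Msr ε + Real.sqrt n * (lam0 * ∑ j, |b j|) := by
    linarith [hbasic2, hl1a']
  have hvup2 : Msr (ε - X *ᵥ b) ≤ Msr ε +
      (2 * (Real.sqrt n * (lam0 * ∑ j, |β0 j|)) - Real.sqrt n * (lam0 * ∑ j, |b j|)) := by
    linarith [hbasic2, hl1b']
  have hv2a := pow_le_pow_left₀ hv0 hvup1 2
  have hv2b := pow_le_pow_left₀ hv0 hvup2 2
  -- assemble and apply the core lemma
  refine corelem η (2 * (Real.sqrt (1 + (η / 2) ^ 2) - 1)) (Msr ε)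
    (Real.sqrt n * (lam0 * ∑ j, |β0 j|)) (Real.sqrt n * (lam0 * ∑ j, |b j|))
    hη0 hη1 he0 hcsq hc0 hA0 hA hΛ0 ?_ ?_ ?_
  · linarith [hbasic2, htri, hl1c']
  · linarith [hexp, hv2a, hW, le_abs_self (∑ i, ε i * (X *ᵥ b) i)]
  · linarith [hexp, hv2b, hW, le_abs_self (∑ i, ε i * (X *ᵥ b) i)]
end
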